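/- arXiv:1212.5662 — 2 statements merged into one kernel-verified Lean document; each statement's English description precedes it below -/
import Mathlib

section
/- (Jarník) Let φ and ρ be mutually inverse positive functions on (0,∞) with φ(0) = ρ(0) = 0, such that for some η > 0 the function t ↦ φ(t)·t^{−η} is increasing on (0,∞) and tends to +∞ as t → ∞, and such that φ(αt) > α^η φ(t) for all α > 1 and t > 0. If limsup_{t→∞} φ(t)·ᵗψ(t) < ∞, then there exists a vector α ∈ ℝ^n such that liminf_{t→∞} ρ(t)·ψ^{Θ,α}(t) > 0. -/
open Filter MeasureTheory

/-- Distance from a real number `t` to the nearest integer, `‖t‖`. -/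
noncomputable def distInt (t : ℝ) : ℝ := |t - round t|

/-- The system of linear forms `L_j(x) = ∑_i Θ_j^i x_i` attached to a matrix. -/
noncomputable def lform {m n : ℕ} (Θ : Matrix (Fin n) (Fin m) ℝ) (x : Fin m → ℤ) (j : Fin n) :
    ℝ := ∑ i, Θ j i * (x i : ℝ)

/-- Sup-norm `max_i |x_i|` of an integer vector, as a real number. -/
noncomputable def supAbs {k : ℕ} (x : Fin k → ℤ) : ℝ := ⨆ i, |(x i : ℝ)|

/-- `ψ^Θ(t)`: the minimum of `max_j ‖L_j(x)‖` over nonzero integer `x` with `max_i |x_i| ≤ t`. -/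
noncomputable def psi {m n : ℕ} (Θ : Matrix (Fin n) (Fin m) ℝ) (t : ℝ) : ℝ :=
  sInf { v | ∃ x : Fin m → ℤ, x ≠ 0 ∧ supAbs x ≤ t ∧ v = ⨆ j, distInt (lform Θ x j) }

/-- `ψ^{Θ,α}(t)`: the inhomogeneous analogue of `ψ^Θ(t)`. -/
noncomputable def psiA {m n : ℕ} (Θ : Matrix (Fin n) (Fin m) ℝ) (α : Fin n → ℝ) (t : ℝ) : ℝ :=
  sInf { v | ∃ x : Fin m → ℤ, x ≠ 0 ∧ supAbs x ≤ t ∧ v = ⨆ j, distInt (lform Θ x j - α j) }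

/-- `Θ` is singular: `limsup_{t→∞} t^{m/n} ψ^Θ(t) = 0`. -/
noncomputable def IsSingular {m n : ℕ} (Θ : Matrix (Fin n) (Fin m) ℝ) : Prop :=
  Filter.limsup (fun t : ℝ => ENNReal.ofReal (t ^ ((m : ℝ) / (n : ℝ)) * psi Θ t))
    Filter.atTop = 0

/-- Property (1) (Khintchine's Chebyshev property). -/
def Chebyshev1 {m n : ℕ} (Θ : Matrix (Fin n) (Fin m) ℝ) : Prop :=
  ∀ α : Fin n → ℝ, ∃ Γ : ℝ, 0 < Γ ∧ ∀ T : ℝ, ∃ x : Fin m → ℤ,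
    T ≤ supAbs x ∧
      (⨆ j, distInt (lform Θ x j - α j)) < Γ * (supAbs x) ^ (-(m : ℝ) / (n : ℝ))

/-- Property (2) (Cassels' version, with `Γ` uniform in `α`). -/
def Chebyshev2 {m n : ℕ} (Θ : Matrix (Fin n) (Fin m) ℝ) : Prop :=
  ∃ Γ : ℝ, 0 < Γ ∧ ∀ α : Fin n → ℝ, ∀ T : ℝ, ∃ x : Fin m → ℤ,
    T ≤ supAbs x ∧
      (⨆ j, distInt (lform Θ x j - α j)) < Γ * (supAbs x) ^ (-(m : ℝ) / (n : ℝ))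

/-- `y` is a sequence of best approximations associated to the system of forms of `M`
(for the forms `ᵗL_i` of a matrix `Θ`, apply this to `M = Θᵀ`). -/
def IsBestApproxSeq {p q : ℕ} (M : Matrix (Fin p) (Fin q) ℝ) (y : ℕ → Fin q → ℤ) : Prop :=
  (∀ ν, y ν ≠ 0) ∧
  StrictMono (fun ν => supAbs (y ν)) ∧
  StrictAnti (fun ν => ⨆ i, distInt (lform M (y ν) i)) ∧
  ∀ ν, ∀ z : Fin q → ℤ, z ≠ 0 → supAbs z < supAbs (y (ν + 1)) →
    (⨆ i, distInt (lform M (y ν) i)) ≤ ⨆ i, distInt (lform M z i)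

/-- The constant `K = 2^{-(d-1)} d^{-1/2} σ`, where `σ` is the `(d-1)`-dimensional Hausdorff
measure of the central section `{z ∈ [-1,1]^d : z_1 + ... + z_d = 0}` of the cube. -/
noncomputable def Kconst (d : ℕ) : ℝ :=
  ((MeasureTheory.Measure.hausdorffMeasure ((d : ℝ) - 1) :
      MeasureTheory.Measure (EuclideanSpace ℝ (Fin d)))
    {z : EuclideanSpace ℝ (Fin d) | (∀ i, |z i| ≤ 1) ∧ ∑ i, z i = 0}).toReal /
    (2 ^ (d - 1) * Real.sqrt d)

/-- `R_{m,n} = max_{0<r<1} r^n (1-r)^m`. -/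
noncomputable def Rconst (m n : ℕ) : ℝ :=
  sSup {v : ℝ | ∃ r : ℝ, 0 < r ∧ r < 1 ∧ v = r ^ n * (1 - r) ^ m}

/-- `G_{m,n}(ε) = d^d (m^m n^n)^{d(d-1)} / (ε^d K R)^{d(d-1)}` with `d = m + n`. -/
noncomputable def Gconst (m n : ℕ) (ε : ℝ) : ℝ :=
  ((m : ℝ) + n) ^ (m + n) * ((m : ℝ) ^ m * (n : ℝ) ^ n) ^ ((m + n) * (m + n - 1)) /
    (ε ^ (m + n) * Kconst (m + n) * Rconst m n) ^ ((m + n) * (m + n - 1))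

/-!
Transference: for `y ∈ ℤⁿ` and `x ∈ ℤᵐ`,
`‖⟨y, α⟩‖ ≤ m |x| max_i ‖ᵗL_i(y)‖ + n |y| max_j ‖L_j(x) - α_j‖`.
Hence if `m t max_i ‖ᵗL_i(y)‖ ≤ δ / 2` while `‖⟨y, α⟩‖ ≥ δ`, then `ψ^{Θ,α}(t) ≥ δ / (2 n |y|)`;
it remains to find, for every large `t`, such a `y` with `|y| ≲ ρ(t)`.

If `ᵗL(z) ∈ ℤᵐ` for some `z ≠ 0`, take `y = z` and `⟨z, α⟩ = 1/2`. Otherwise let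
`B_{j+1} = max (8n B_j) (ρ (2C / ᵗψ(B_j)))`. Since `φ ᵗψ ≤ C`, the value `ᵗψ(B_j)` at least
halves at each step, so vectors `y_j` realising `ᵗψ(B_{j+1})` have `B_j < |y_j| ≤ B_{j+1}`.
Nested cubes of side `≍ 1/B_j` then give `α` with `‖⟨y_j, α⟩‖ ≥ 1/(64n)` for all `j`. Finally,
for small `K` and `φ(K B_{j+1}) ≤ t < φ(K B_{j+2})`, the growth condition in the form
`φ(κ s) ≤ κ^η φ(s)` for `κ ≤ 1` shows that `y_j` is admissible at time `t`, with `K |y_j| ≤ ρ(t)`.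
-/

open Set Metric
open scoped Matrix

lemma tendsto_atTop_of_mul_le {B : ℕ → ℝ} {Λ : ℝ} (hΛ : 1 < Λ) (hB0 : 0 < B 0)
    (hB : ∀ j, Λ * B j ≤ B (j + 1)) : Tendsto B atTop atTop := by
  have h (j : ℕ) : Λ ^ j * B 0 ≤ B j := by
    induction j with
    | zero => simp
    | succ j ih =>
      calc Λ ^ (j + 1) * B 0 = Λ * (Λ ^ j * B 0) := by ring
        _ ≤ Λ * B j := by gcongr
        _ ≤ B (j + 1) := hB j
  exact tendsto_atTop_mono h ((tendsto_pow_atTop_atTop_of_one_lt hΛ).atTop_mul_const hB0)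

lemma exists_le_lt_succ_of_tendsto {a : ℕ → ℝ} (ha : Tendsto a atTop atTop) {t : ℝ}
    (ht : a 0 ≤ t) : ∃ k, a k ≤ t ∧ t < a (k + 1) := by
  classical
  have hex : ∃ k, t < a (k + 1) :=
    (((tendsto_add_atTop_iff_nat 1).2 ha).eventually_gt_atTop t).exists
  refine ⟨Nat.find hex, ?_, Nat.find_spec hex⟩
  rcases h : Nat.find hex with _ | k
  · exact ht
  · exact not_lt.1 (Nat.find_min hex (h ▸ k.lt_succ_self))

lemma exists_pos_le_one_rpow_le {η ε : ℝ} (hη : 0 < η) (hε : 0 < ε) :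
    ∃ κ : ℝ, 0 < κ ∧ κ ≤ 1 ∧ κ ^ η ≤ ε := by
  refine ⟨min 1 (ε ^ η⁻¹), lt_min one_pos (by positivity), min_le_left _ _, ?_⟩
  calc min 1 (ε ^ η⁻¹) ^ η ≤ (ε ^ η⁻¹) ^ η :=
        Real.rpow_le_rpow (by positivity) (min_le_right _ _) hη.le
    _ = ε := Real.rpow_inv_rpow hε.le hη.ne'

lemma exists_eventually_le_of_limsup_lt_top {ι : Type*} {l : Filter ι} {f : ι → ℝ}
    (h : limsup (fun x => ENNReal.ofReal (f x)) l < ⊤) : ∃ C, ∀ᶠ x in l, f x ≤ C := by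
  obtain ⟨b, hb, hbtop⟩ := exists_between h
  exact ⟨b.toReal, (eventually_lt_of_limsup_lt hb).mono fun x hx =>
    (ENNReal.ofReal_le_iff_le_toReal hbtop.ne).1 hx.le⟩

section DistInt

lemma distInt_eq_norm (t : ℝ) : distInt t = ‖(t : UnitAddCircle)‖ :=
  UnitAddCircle.norm_eq.symm

lemma distInt_nonneg (t : ℝ) : 0 ≤ distInt t := abs_nonneg _

lemma distInt_le_abs (t : ℝ) : distInt t ≤ |t| := by
  simpa [distInt] using round_le t 0

lemma distInt_of_abs_le_half {t : ℝ} (ht : |t| ≤ 1 / 2) : distInt t = |t| := by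
  rw [distInt_eq_norm, AddCircle.norm_coe_eq_abs_iff (p := 1) one_ne_zero, abs_one]
  exact ht

lemma distInt_sub_le (a b : ℝ) : distInt (a - b) ≤ distInt a + distInt b := by
  simp only [distInt_eq_norm, AddCircle.coe_sub]
  exact norm_sub_le _ _

lemma distInt_le_add_abs_sub (a b : ℝ) : distInt a ≤ distInt b + |a - b| := by
  have h := distInt_sub_le b (b - a)
  rw [sub_sub_cancel] at h
  linarith [distInt_le_abs (b - a), abs_sub_comm a b]

lemma distInt_sum_le {ι : Type*} (s : Finset ι) (k : ι → ℤ) (a : ι → ℝ) :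
    distInt (∑ i ∈ s, (k i : ℝ) * a i) ≤ ∑ i ∈ s, |(k i : ℝ)| * distInt (a i) := by
  have hsum : ((∑ i ∈ s, (k i : ℝ) * a i : ℝ) : UnitAddCircle) =
      ∑ i ∈ s, k i • (a i : UnitAddCircle) := by
    simp_rw [← AddCircle.coe_zsmul, zsmul_eq_mul]
    exact map_sum (QuotientAddGroup.mk' _) _ s
  rw [distInt_eq_norm, hsum]
  refine (norm_sum_le _ _).trans (Finset.sum_le_sum fun i _ => ?_)
  simpa [distInt_eq_norm, Int.norm_eq_abs] using norm_zsmul_le (k i) (a i : UnitAddCircle)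

lemma exists_abs_sub_le_and_le_distInt (a : ℝ) {w : ℝ} (hw0 : 0 ≤ w) (hw : w ≤ 1 / 2) :
    ∃ p, |p - a| ≤ w ∧ w / 2 ≤ distInt p := by
  by_cases ha : w / 2 ≤ distInt a
  · exact ⟨a, by simpa using hw0, ha⟩
  · refine ⟨a + w, by simp [abs_of_nonneg hw0], ?_⟩
    have h := distInt_sub_le (a + w) a
    rw [add_sub_cancel_left, distInt_of_abs_le_half (by rwa [abs_of_nonneg hw0]),
      abs_of_nonneg hw0] at h
    linarith

end DistInt

section SupAbs

variable {k : ℕ}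

lemma abs_le_supAbs (y : Fin k → ℤ) (i : Fin k) : |(y i : ℝ)| ≤ supAbs y :=
  le_ciSup (f := fun i => |(y i : ℝ)|) (Finite.bddAbove_range _) i

lemma supAbs_nonneg (y : Fin k → ℤ) : 0 ≤ supAbs y :=
  Real.iSup_nonneg fun _ => abs_nonneg _

lemma one_le_supAbs {y : Fin k → ℤ} (hy : y ≠ 0) : 1 ≤ supAbs y := by
  obtain ⟨i, hi⟩ := Function.ne_iff.1 hy
  exact le_trans (by exact_mod_cast Int.one_le_abs hi) (abs_le_supAbs y i)

lemma exists_ne_zero_supAbs_le (hk : 0 < k) {t : ℝ} (ht : 1 ≤ t) :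
    ∃ x : Fin k → ℤ, x ≠ 0 ∧ supAbs x ≤ t := by
  have : Nonempty (Fin k) := ⟨⟨0, hk⟩⟩
  exact ⟨1, one_ne_zero, by simpa [supAbs] using ht⟩

lemma finite_setOf_supAbs_le (k : ℕ) (t : ℝ) : {y : Fin k → ℤ | supAbs y ≤ t}.Finite := by
  refine (Set.finite_Icc (fun _ => -⌈t⌉) fun _ => ⌈t⌉).subset fun y hy => ?_
  have h (i : Fin k) : |y i| ≤ ⌈t⌉ := by
    exact_mod_cast ((abs_le_supAbs y i).trans hy).trans (Int.le_ceil t)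
  exact ⟨fun i => (abs_le.1 (h i)).1, fun i => (abs_le.1 (h i)).2⟩

lemma sum_abs_mul_le (x : Fin k → ℤ) {d : Fin k → ℝ} {D : ℝ} (hd0 : ∀ i, 0 ≤ d i)
    (hd : ∀ i, d i ≤ D) : ∑ i, |(x i : ℝ)| * d i ≤ k * supAbs x * D := by
  calc ∑ i, |(x i : ℝ)| * d i ≤ ∑ _i : Fin k, supAbs x * D :=
        Finset.sum_le_sum fun i _ =>
          mul_le_mul (abs_le_supAbs x i) (hd i) (hd0 i) (supAbs_nonneg x)
    _ = k * supAbs x * D := by simp [mul_assoc]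

lemma abs_sum_mul_le (y : Fin k → ℤ) (a : Fin k → ℝ) :
    |∑ i, (y i : ℝ) * a i| ≤ k * supAbs y * ‖a‖ := by
  refine (Finset.abs_sum_le_sum_abs _ _).trans ?_
  simp only [abs_mul]
  exact sum_abs_mul_le y (fun _ => abs_nonneg _) fun i => norm_le_pi_norm a i

end SupAbs

noncomputable def formDist {p q : ℕ} (M : Matrix (Fin p) (Fin q) ℝ) (y : Fin q → ℤ) : ℝ :=
  ⨆ i, distInt (lform M y i)

section FormDist

variable {p q : ℕ} (M : Matrix (Fin p) (Fin q) ℝ)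

lemma formDist_nonneg (y : Fin q → ℤ) : 0 ≤ formDist M y :=
  Real.iSup_nonneg fun _ => distInt_nonneg _

lemma distInt_le_formDist (y : Fin q → ℤ) (i : Fin p) : distInt (lform M y i) ≤ formDist M y :=
  le_ciSup (f := fun i => distInt (lform M y i)) (Finite.bddAbove_range _) i

lemma psi_le_formDist {t : ℝ} {y : Fin q → ℤ} (hy : y ≠ 0) (hyt : supAbs y ≤ t) :
    psi M t ≤ formDist M y :=
  csInf_le ⟨0, by rintro _ ⟨x, -, -, rfl⟩; exact formDist_nonneg M x⟩ ⟨y, hy, hyt, rfl⟩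

lemma exists_formDist_eq_psi (hq : 0 < q) {t : ℝ} (ht : 1 ≤ t) :
    ∃ y : Fin q → ℤ, y ≠ 0 ∧ supAbs y ≤ t ∧ formDist M y = psi M t := by
  set S := {v | ∃ x : Fin q → ℤ, x ≠ 0 ∧ supAbs x ≤ t ∧ v = formDist M x}
  have hne : S.Nonempty := by
    obtain ⟨x, hx, hxt⟩ := exists_ne_zero_supAbs_le hq ht
    exact ⟨_, x, hx, hxt, rfl⟩
  have hfin : S.Finite := ((finite_setOf_supAbs_le q t).image (formDist M)).subset <| by
    rintro _ ⟨x, -, hxt, rfl⟩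
    exact ⟨x, hxt, rfl⟩
  obtain ⟨y, hy, hyt, hψ⟩ := hne.csInf_mem hfin
  exact ⟨y, hy, hyt, hψ.symm⟩

lemma psi_pos (hq : 0 < q) (hM : ∀ y : Fin q → ℤ, y ≠ 0 → 0 < formDist M y) {t : ℝ}
    (ht : 1 ≤ t) : 0 < psi M t := by
  obtain ⟨y, hy, -, hψ⟩ := exists_formDist_eq_psi M hq ht
  exact hψ ▸ hM y hy

end FormDist

section Transference

variable {m n : ℕ} (Θ : Matrix (Fin n) (Fin m) ℝ) (α : Fin n → ℝ)

lemma distInt_sum_mul_le (y : Fin n → ℤ) (x : Fin m → ℤ) :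
    distInt (∑ j, (y j : ℝ) * α j) ≤
      m * supAbs x * formDist Θᵀ y + n * supAbs y * ⨆ j, distInt (lform Θ x j - α j) := by
  have hsplit : ∑ j, (y j : ℝ) * α j =
      ∑ i, (x i : ℝ) * lform Θᵀ y i - ∑ j, (y j : ℝ) * (lform Θ x j - α j) := by
    have hswap : ∑ i, (x i : ℝ) * lform Θᵀ y i = ∑ j, (y j : ℝ) * lform Θ x j := by
      simp only [lform, Matrix.transpose_apply, Finset.mul_sum]
      rw [Finset.sum_comm]
      exact Finset.sum_congr rfl fun _ _ => Finset.sum_congr rfl fun _ _ => by ring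
    simp [hswap, mul_sub]
  rw [hsplit]
  refine (distInt_sub_le _ _).trans (add_le_add ?_ ?_)
  · exact (distInt_sum_le _ _ _).trans
      (sum_abs_mul_le x (fun _ => distInt_nonneg _) (distInt_le_formDist _ y))
  · exact (distInt_sum_le _ _ _).trans
      (sum_abs_mul_le y (fun _ => distInt_nonneg _) fun j =>
        le_ciSup (f := fun j => distInt (lform Θ x j - α j)) (Finite.bddAbove_range _) j)

lemma le_psiA_of_forall_le (hm : 0 < m) {t b : ℝ} (ht : 1 ≤ t)
    (hb : ∀ x : Fin m → ℤ, x ≠ 0 → supAbs x ≤ t → b ≤ ⨆ j, distInt (lform Θ x j - α j)) :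
    b ≤ psiA Θ α t := by
  obtain ⟨x, hx, hxt⟩ := exists_ne_zero_supAbs_le hm ht
  exact le_csInf ⟨_, x, hx, hxt, rfl⟩ fun _ ⟨x, hx, hxt, hv⟩ => hv ▸ hb x hx hxt

def IsObstruction (δ t : ℝ) (y : Fin n → ℤ) : Prop :=
  m * t * formDist Θᵀ y ≤ δ / 2 ∧ δ ≤ distInt (∑ j, (y j : ℝ) * α j)

lemma div_le_psiA_of_isObstruction (hm : 0 < m) {δ t : ℝ} (ht : 1 ≤ t) {y : Fin n → ℤ}
    (hy : IsObstruction Θ α δ t y) : δ / (2 * n * supAbs y) ≤ psiA Θ α t := by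
  refine le_psiA_of_forall_le Θ α hm ht fun x _ hxt => div_le_of_le_mul₀
    (mul_nonneg (by positivity) (supAbs_nonneg y))
    (Real.iSup_nonneg fun _ => distInt_nonneg _) ?_
  have hx : m * supAbs x * formDist Θᵀ y ≤ m * t * formDist Θᵀ y := by
    gcongr
    exact formDist_nonneg _ y
  linarith [hy.1, hy.2, distInt_sum_mul_le Θ α y x]

end Transference

section Lacunary

variable {n : ℕ}

lemma exists_closedBall_subset_forall_le_distInt {y : Fin n → ℤ} (hy : y ≠ 0) (c : Fin n → ℝ)
    {r w s : ℝ} (hw0 : 0 ≤ w) (hw : w ≤ 1 / 2) (hwr : w ≤ supAbs y * r / 2) (hs0 : 0 ≤ s)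
    (hs : 4 * n * supAbs y * s ≤ w) :
    ∃ c', closedBall c' s ⊆ closedBall c r ∧
      ∀ α ∈ closedBall c' s, w / 4 ≤ distInt (∑ i, (y i : ℝ) * α i) := by
  obtain ⟨i, hi⟩ := Function.ne_iff.1 hy
  have : Nonempty (Fin n) := ⟨i⟩
  have hn : (1 : ℝ) ≤ n := by exact_mod_cast Fin.pos i
  set H := supAbs y
  have hH : 1 ≤ H := one_le_supAbs hy
  obtain ⟨i₀, hi₀⟩ : ∃ i₀, |(y i₀ : ℝ)| = H := exists_eq_ciSup_of_finite
  have hyi₀ : (y i₀ : ℝ) ≠ 0 := by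
    rw [← abs_pos, hi₀]
    linarith
  set a := ∑ i, (y i : ℝ) * c i
  obtain ⟨p, hpa, hp⟩ := exists_abs_sub_le_and_le_distInt a hw0 hw
  -- moving the centre along the coordinate where `|y_i|` is maximal moves `⟨y, c⟩` to `p`
  set c' := c + Pi.single i₀ ((p - a) / y i₀)
  have hc' : ∑ i, (y i : ℝ) * c' i = p := by
    simp [c', mul_add, Finset.sum_add_distrib, Pi.single_apply, a, mul_div_cancel₀ _ hyi₀]
  have hcc' : dist c' c ≤ r / 2 := by
    rw [dist_eq_norm, add_sub_cancel_left, Pi.norm_single, Real.norm_eq_abs, abs_div, hi₀,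
      div_le_iff₀ (by linarith)]
    linarith
  have hsH : n * H * s ≤ w / 4 := by linarith
  refine ⟨c', closedBall_subset_closedBall' ?_, fun α hα => ?_⟩
  · have h4s : 4 * n * s ≤ r / 2 :=
      le_of_mul_le_mul_left (by linarith : H * (4 * n * s) ≤ H * (r / 2)) (by linarith)
    nlinarith
  · have hdiff : |∑ i, (y i : ℝ) * α i - p| ≤ w / 4 := by
      rw [← hc', ← Finset.sum_sub_distrib]
      simp only [← mul_sub]
      calc |∑ i, (y i : ℝ) * (α i - c' i)| ≤ n * H * ‖α - c'‖ := abs_sum_mul_le y (α - c')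
        _ ≤ n * H * s := by gcongr; exact mem_closedBall_iff_norm.1 hα
        _ ≤ w / 4 := hsH
    have := distInt_le_add_abs_sub p (∑ i, (y i : ℝ) * α i)
    rw [abs_sub_comm] at this
    linarith

lemma exists_closedBall_subset_forall_le_distInt_of_lacunary {B B' : ℝ} {y : Fin n → ℤ}
    (hB : 0 < B) (hBB' : 8 * n * B ≤ B') (hBy : B < supAbs y) (hyB' : supAbs y ≤ B')
    (c : Fin n → ℝ) :
    ∃ c', closedBall c' (1 / (8 * n * B')) ⊆ closedBall c (1 / (8 * n * B)) ∧
      ∀ α ∈ closedBall c' (1 / (8 * n * B')), 1 / (64 * n) ≤ distInt (∑ i, (y i : ℝ) * α i) := by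
  have hy : y ≠ 0 := by
    rintro rfl
    simp only [supAbs, Pi.zero_apply, Int.cast_zero, abs_zero, Real.iSup_const_zero] at hBy
    linarith
  have hn : (1 : ℝ) ≤ n := by
    obtain ⟨i, -⟩ := Function.ne_iff.1 hy
    exact_mod_cast Fin.pos i
  have hB' : 0 < B' := by linarith
  set H := supAbs y
  have hHr : 1 / (16 * n) ≤ H * (1 / (8 * n * B)) / 2 := by
    rw [show H * (1 / (8 * n * B)) / 2 = 1 / (16 * n) * (H / B) by field_simp; ring]
    exact le_mul_of_one_le_right (by positivity) ((one_le_div hB).2 hBy.le)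
  have hs : 4 * n * H * (1 / (8 * n * B')) ≤ min (H * (1 / (8 * n * B)) / 2) (1 / 2) := by
    rw [show 4 * n * H * (1 / (8 * n * B')) = H / (2 * B') by field_simp; ring]
    refine le_min ?_ ?_
    · rw [show H * (1 / (8 * n * B)) / 2 = H / (16 * n * B) by field_simp; ring]
      exact div_le_div_of_nonneg_left (by linarith) (by positivity) (by linarith)
    · rw [div_le_iff₀ (by positivity)]
      linarith
  obtain ⟨c', hsub, hprot⟩ := exists_closedBall_subset_forall_le_distInt hy c
    (le_min ((by positivity : (0 : ℝ) ≤ 1 / (16 * n)).trans hHr) (by norm_num))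
    (min_le_right _ _) (min_le_left _ _) (by positivity) hs
  refine ⟨c', hsub, fun α hα => le_trans ?_ (hprot α hα)⟩
  calc (1 : ℝ) / (64 * n) = 1 / (16 * n) / 4 := by ring
    _ ≤ _ := by
      gcongr
      exact le_min hHr (by rw [div_le_div_iff₀ (by positivity) (by norm_num)]; linarith)

lemma exists_forall_le_distInt_of_lacunary {B : ℕ → ℝ} {y : ℕ → Fin n → ℤ}
    (hB0 : 0 < B 0) (hB : ∀ j, 8 * n * B j ≤ B (j + 1))
    (hy : ∀ j, B j < supAbs (y j) ∧ supAbs (y j) ≤ B (j + 1)) :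
    ∃ α : Fin n → ℝ, ∀ j, 1 / (64 * n) ≤ distInt (∑ i, (y j i : ℝ) * α i) := by
  have hBpos (j : ℕ) : 0 < B j := by
    induction j with
    | zero => exact hB0
    | succ j ih => exact (ih.trans (hy j).1).trans_le (hy j).2
  choose next hnext using fun j => exists_closedBall_subset_forall_le_distInt_of_lacunary
    (hBpos j) (hB j) (hy j).1 (hy j).2
  let c : ℕ → Fin n → ℝ := fun j => Nat.rec 0 next j
  obtain ⟨α, hα⟩ := IsCompact.nonempty_iInter_of_sequence_nonempty_isCompact_isClosed
    (fun j => closedBall (c j) (1 / (8 * n * B j))) (fun j => (hnext j (c j)).1)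
    (fun j => nonempty_closedBall.2 (by positivity [hBpos j])) (isCompact_closedBall _ _)
    (fun _ => isClosed_closedBall)
  rw [mem_iInter] at hα
  exact ⟨α, fun j => (hnext j (c j)).2 α (hα (j + 1))⟩

variable {p : ℕ}

lemma exists_forall_le_distInt_of_psi_strictAnti (hn : 0 < n) (M : Matrix (Fin p) (Fin n) ℝ)
    {B : ℕ → ℝ} (hB0 : 1 ≤ B 0) (hB : ∀ j, 8 * n * B j ≤ B (j + 1))
    (hψ : StrictAnti fun j => psi M (B j)) :
    ∃ α : Fin n → ℝ, ∃ v : ℕ → Fin n → ℤ, ∀ j, supAbs (v j) ≤ B (j + 1) ∧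
      formDist M (v j) = psi M (B (j + 1)) ∧ 1 / (64 * n) ≤ distInt (∑ i, (v j i : ℝ) * α i) := by
  have hB1 (j : ℕ) : 1 ≤ B j := by
    induction j with
    | zero => exact hB0
    | succ j ih =>
      have : (1 : ℝ) ≤ n := by exact_mod_cast hn
      nlinarith [hB j]
  choose w hw0 hwB hwψ using fun j => exists_formDist_eq_psi M hn (hB1 j)
  -- a minimiser at `B (j + 1)` of length `≤ B j` would contradict `ψ (B (j + 1)) < ψ (B j)`
  have hgap (j : ℕ) : B j < supAbs (w (j + 1)) := by
    by_contra! h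
    have := psi_le_formDist M (hw0 (j + 1)) h
    rw [hwψ] at this
    exact (hψ j.lt_succ_self).not_ge this
  obtain ⟨α, hα⟩ := exists_forall_le_distInt_of_lacunary (y := fun j => w (j + 1))
    (by linarith [hB1 0]) hB fun j => ⟨hgap j, hwB (j + 1)⟩
  exact ⟨α, fun j => w (j + 1), fun j => ⟨hwB _, hwψ _, hα j⟩⟩

end Lacunary

section Growth

variable {φ ρ : ℝ → ℝ} {η : ℝ}

lemma strictMonoOn_of_growth (hφ : ∀ t : ℝ, 0 < t → 0 < φ t) (hη : 0 < η)
    (hgrow : ∀ c : ℝ, 1 < c → ∀ t : ℝ, 0 < t → c ^ η * φ t < φ (c * t)) :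
    StrictMonoOn φ (Ioi 0) := by
  intro a ha b _ hab
  have hc : 1 < b / a := (one_lt_div ha).2 hab
  have h := hgrow (b / a) hc a ha
  rw [div_mul_cancel₀ _ ha.ne'] at h
  exact (lt_mul_of_one_lt_left (hφ a ha) (Real.one_lt_rpow hc hη)).trans h

lemma apply_mul_le_rpow_mul
    (hgrow : ∀ c : ℝ, 1 < c → ∀ t : ℝ, 0 < t → c ^ η * φ t < φ (c * t))
    {κ u : ℝ} (hκ0 : 0 < κ) (hκ1 : κ ≤ 1) (hu : 0 < u) : φ (κ * u) ≤ κ ^ η * φ u := by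
  rcases hκ1.eq_or_lt with rfl | hκ1
  · simp
  · have h := hgrow κ⁻¹ ((one_lt_inv₀ hκ0).2 hκ1) (κ * u) (by positivity)
    rw [inv_mul_cancel_left₀ hκ0.ne', Real.inv_rpow hκ0.le,
      inv_mul_lt_iff₀ (Real.rpow_pos_of_pos hκ0 η)] at h
    exact h.le

lemma tendsto_atTop_of_growth (hφ : ∀ t : ℝ, 0 < t → 0 < φ t) (hη : 0 < η)
    (hgrow : ∀ c : ℝ, 1 < c → ∀ t : ℝ, 0 < t → c ^ η * φ t < φ (c * t)) :
    Tendsto φ atTop atTop := by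
  refine tendsto_atTop_mono' atTop ?_ ((tendsto_rpow_atTop hη).atTop_mul_const (hφ 1 one_pos))
  filter_upwards [eventually_ge_atTop 1] with t ht
  rcases ht.eq_or_lt with rfl | ht
  · simp
  · simpa using (hgrow t ht 1 one_pos).le

lemma le_of_apply_le (hφ : StrictMonoOn φ (Ioi 0)) (hρ : MapsTo ρ (Ioi 0) (Ioi 0))
    (hinv : RightInvOn ρ φ (Ioi 0)) {X t : ℝ} (hX : 0 < X) (ht : 0 < t) (h : φ X ≤ t) :
    X ≤ ρ t := by
  by_contra! hlt
  have := hφ (hρ ht) hX hlt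
  rw [hinv ht] at this
  linarith

lemma tendsto_atTop_of_rightInvOn (hφpos : MapsTo φ (Ioi 0) (Ioi 0))
    (hφ : StrictMonoOn φ (Ioi 0)) (hρ : MapsTo ρ (Ioi 0) (Ioi 0))
    (hinv : RightInvOn ρ φ (Ioi 0)) : Tendsto ρ atTop atTop := by
  refine tendsto_atTop.2 fun X => ?_
  have hX : (0 : ℝ) < max X 1 := lt_max_of_lt_right one_pos
  filter_upwards [eventually_ge_atTop (φ (max X 1))] with t ht
  exact (le_max_left _ _).trans (le_of_apply_le hφ hρ hinv hX ((hφpos hX).trans_le ht) ht)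

lemma apply_mul_max_le (hρ : MapsTo ρ (Ioi 0) (Ioi 0)) (hinv : RightInvOn ρ φ (Ioi 0))
    (hgrow : ∀ c : ℝ, 1 < c → ∀ t : ℝ, 0 < t → c ^ η * φ t < φ (c * t))
    (hη : 0 < η) {κ Λ B u : ℝ} (hκ0 : 0 < κ) (hκ1 : κ ≤ 1) (hΛ : 1 ≤ Λ) (hB : 0 < B)
    (hu : 0 < u) : φ (κ / Λ * max (Λ * B) (ρ u)) ≤ κ ^ η * max (φ B) u := by
  have hκΛ : κ / Λ ≤ κ := div_le_self hκ0.le hΛ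
  rcases le_total (Λ * B) (ρ u) with h | h
  · rw [max_eq_right h]
    calc φ (κ / Λ * ρ u) ≤ (κ / Λ) ^ η * φ (ρ u) :=
          apply_mul_le_rpow_mul hgrow (by positivity) (hκΛ.trans hκ1) (hρ hu)
      _ ≤ κ ^ η * max (φ B) u := by
        rw [hinv hu]
        gcongr
        exact le_max_right _ _
  · rw [max_eq_left h, show κ / Λ * (Λ * B) = κ * B by field_simp]
    calc φ (κ * B) ≤ κ ^ η * φ B := apply_mul_le_rpow_mul hgrow hκ0 hκ1 hB
      _ ≤ κ ^ η * max (φ B) u := by gcongr; exact le_max_left _ _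

end Growth

lemma exists_lacunary_seq {φ ρ g : ℝ → ℝ} {η C T Λ : ℝ} (hφpos : ∀ t : ℝ, 0 < t → 0 < φ t)
    (hρ : MapsTo ρ (Ioi 0) (Ioi 0)) (hinv : RightInvOn ρ φ (Ioi 0)) (hη : 0 < η)
    (hgrow : ∀ c : ℝ, 1 < c → ∀ t : ℝ, 0 < t → c ^ η * φ t < φ (c * t))
    (hC : 0 < C) (hΛ : 1 ≤ Λ) (hg : ∀ t, 1 ≤ t → 0 < g t) (hφg : ∀ t, T ≤ t → φ t * g t ≤ C) :
    ∃ B : ℕ → ℝ, (∀ j, 1 ≤ B j) ∧ (∀ j, Λ * B j ≤ B (j + 1)) ∧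
      (∀ j, 2 * g (B (j + 1)) ≤ g (B j)) ∧
      ∀ j κ, 0 < κ → κ ≤ 1 → φ (κ / Λ * B (j + 1)) * g (B j) ≤ 2 * C * κ ^ η := by
  obtain ⟨B, hB0, hBsucc⟩ : ∃ B : ℕ → ℝ, B 0 = max T 1 ∧
      ∀ j, B (j + 1) = max (Λ * B j) (ρ (2 * C / g (B j))) :=
    ⟨fun j => Nat.rec (max T 1) (fun _ b => max (Λ * b) (ρ (2 * C / g b))) j, rfl, fun _ => rfl⟩
  have hΛB (j : ℕ) : Λ * B j ≤ B (j + 1) := hBsucc j ▸ le_max_left _ _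
  have hBT (j : ℕ) : max T 1 ≤ B j := by
    induction j with
    | zero => exact hB0.ge
    | succ j ih =>
      have : 0 ≤ B j := (lt_max_of_lt_right one_pos).le.trans ih
      exact ih.trans ((le_mul_of_one_le_left this hΛ).trans (hΛB j))
  have hB1 (j : ℕ) : 1 ≤ B j := (le_max_right _ _).trans (hBT j)
  have hgB (j : ℕ) : 0 < g (B j) := hg _ (hB1 j)
  have hφgB (j : ℕ) : φ (B j) * g (B j) ≤ C := hφg _ ((le_max_left _ _).trans (hBT j))
  have hu (j : ℕ) : 0 < 2 * C / g (B j) := div_pos (by linarith) (hgB j)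
  refine ⟨B, hB1, hΛB, fun j => ?_, fun j κ hκ0 hκ1 => ?_⟩
  · -- `φ (B (j + 1)) ≥ φ (ρ (2C / g (B j))) = 2C / g (B j)`, while `φ g ≤ C` at `B (j + 1)`
    have hφB : 2 * C / g (B j) ≤ φ (B (j + 1)) := by
      rw [← hinv (hu j)]
      exact (strictMonoOn_of_growth hφpos hη hgrow).monotoneOn (hρ (hu j))
        (show (0 : ℝ) < B (j + 1) by linarith [hB1 (j + 1)]) (hBsucc j ▸ le_max_right _ _)
    have h := (mul_le_mul_of_nonneg_right hφB (hgB (j + 1)).le).trans (hφgB (j + 1))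
    rw [div_mul_eq_mul_div, div_le_iff₀ (hgB j)] at h
    nlinarith
  · have hmax : max (φ (B j)) (2 * C / g (B j)) = 2 * C / g (B j) := by
      refine max_eq_right ?_
      rw [le_div_iff₀ (hgB j)]
      linarith [hφgB j]
    have h := apply_mul_max_le hρ hinv hgrow hη hκ0 hκ1 hΛ (by linarith [hB1 j] : 0 < B j) (hu j)
    rw [← hBsucc j, hmax] at h
    calc φ (κ / Λ * B (j + 1)) * g (B j) ≤ κ ^ η * (2 * C / g (B j)) * g (B j) := by
          gcongr
          exact (hgB j).le
      _ = 2 * C * κ ^ η := by rw [mul_assoc, div_mul_cancel₀ _ (hgB j).ne']; ring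

section Jarnik

variable {m n : ℕ} (Θ : Matrix (Fin n) (Fin m) ℝ)

lemma exists_forall_isObstruction_of_formDist_eq_zero {z : Fin n → ℤ} (hz : z ≠ 0)
    (hz0 : formDist Θᵀ z = 0) : ∃ α : Fin n → ℝ, ∀ t, IsObstruction Θ α (1 / 2) t z := by
  obtain ⟨i, hi⟩ := Function.ne_iff.1 hz
  have hzi : (z i : ℝ) ≠ 0 := by exact_mod_cast hi
  set α : Fin n → ℝ := Pi.single i (1 / (2 * z i))
  have hdot : ∑ j, (z j : ℝ) * α j = 1 / 2 := by
    simp only [α, Pi.single_apply, mul_ite, mul_zero, Finset.sum_ite_eq', Finset.mem_univ,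
      if_true]
    field_simp
  refine ⟨α, fun t => ⟨by norm_num [hz0], ?_⟩⟩
  rw [hdot, distInt_of_abs_le_half] <;> norm_num [abs_of_pos]

lemma exists_eventually_isObstruction_of_formDist_pos (hm : 0 < m) (hn : 0 < n)
    {φ ρ : ℝ → ℝ} {η C : ℝ} (hφpos : ∀ t : ℝ, 0 < t → 0 < φ t)
    (hρ : MapsTo ρ (Ioi 0) (Ioi 0)) (hinv : RightInvOn ρ φ (Ioi 0)) (hη : 0 < η)
    (hgrow : ∀ c : ℝ, 1 < c → ∀ t : ℝ, 0 < t → c ^ η * φ t < φ (c * t)) (hC : 0 < C)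
    (hbound : ∀ᶠ t in atTop, φ t * psi Θᵀ t ≤ C)
    (hΘ : ∀ y : Fin n → ℤ, y ≠ 0 → 0 < formDist Θᵀ y) :
    ∃ α δ K, 0 < δ ∧ 0 < K ∧
      ∀ᶠ t in atTop, ∃ y : Fin n → ℤ, IsObstruction Θ α δ t y ∧ K * supAbs y ≤ ρ t := by
  have hn' : (1 : ℝ) ≤ n := by exact_mod_cast hn
  obtain ⟨T, hT⟩ := eventually_atTop.1 hbound
  have hψ (t : ℝ) (ht : 1 ≤ t) : 0 < psi Θᵀ t := psi_pos Θᵀ hn hΘ ht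
  obtain ⟨B, hB1, hΛB, hhalf, hchain⟩ := exists_lacunary_seq (Λ := 8 * n) hφpos hρ hinv hη hgrow
    hC (by linarith) hψ hT
  obtain ⟨α, v, hv⟩ := exists_forall_le_distInt_of_psi_strictAnti hn Θᵀ (hB1 0) hΛB
    (strictAnti_nat_of_succ_lt fun j => by linarith [hhalf j, hψ _ (hB1 (j + 1))])
  set δ : ℝ := 1 / (64 * n)
  obtain ⟨κ, hκ0, hκ1, hκ⟩ := exists_pos_le_one_rpow_le hη (show 0 < δ / (4 * m * C) by positivity)
  set K := κ / (8 * n)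
  have htend : Tendsto (fun k => φ (K * B (k + 1))) atTop atTop :=
    (tendsto_atTop_of_growth hφpos hη hgrow).comp <|
      (((tendsto_add_atTop_iff_nat 1).2 (tendsto_atTop_of_mul_le (by linarith)
        (by linarith [hB1 0]) hΛB)).const_mul_atTop (by positivity))
  refine ⟨α, δ, K, by positivity, by positivity, ?_⟩
  filter_upwards [eventually_ge_atTop (φ (K * B 1))] with t ht
  obtain ⟨k, hkt, htk⟩ := exists_le_lt_succ_of_tendsto htend ht
  have hBk : 0 < B (k + 1) := by linarith [hB1 (k + 1)]
  refine ⟨v k, ⟨?_, (hv k).2.2⟩, ?_⟩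
  · rw [(hv k).2.1]
    calc m * t * psi Θᵀ (B (k + 1))
        ≤ m * (φ (K * B (k + 1 + 1)) * psi Θᵀ (B (k + 1))) := by
          rw [← mul_assoc]
          gcongr
          exact (hψ _ (hB1 _)).le
      _ ≤ m * (2 * C * (δ / (4 * m * C))) :=
          mul_le_mul_of_nonneg_left ((hchain (k + 1) κ hκ0 hκ1).trans (by gcongr)) (by positivity)
      _ = δ / 2 := by field_simp; ring
  · calc K * supAbs (v k) ≤ K * B (k + 1) := by gcongr; exact (hv k).1
      _ ≤ ρ t := le_of_apply_le (strictMonoOn_of_growth hφpos hη hgrow) hρ hinv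
          (by positivity) ((hφpos _ (by positivity)).trans_le hkt) hkt

lemma zero_lt_liminf_rho_mul_psiA (hm : 0 < m) (hn : 0 < n) (α : Fin n → ℝ) {ρ : ℝ → ℝ}
    {δ K : ℝ} (hδ : 0 < δ) (hK : 0 < K)
    (h : ∀ᶠ t in atTop, ∃ y : Fin n → ℤ, IsObstruction Θ α δ t y ∧ K * supAbs y ≤ ρ t) :
    0 < liminf (fun t => ENNReal.ofReal (ρ t * psiA Θ α t)) atTop := by
  refine (ENNReal.ofReal_pos.2 (by positivity : 0 < K * δ / (2 * n))).trans_le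
    (le_liminf_of_le (by isBoundedDefault) ?_)
  filter_upwards [h, eventually_ge_atTop 1] with t ⟨y, hy, hyρ⟩ ht
  refine ENNReal.ofReal_le_ofReal ?_
  have hy0 : 0 < supAbs y := by
    refine one_pos.trans_le (one_le_supAbs fun h0 => ?_)
    have := hy.2
    simp only [distInt, h0, Pi.zero_apply, Int.cast_zero, zero_mul, Finset.sum_const_zero,
      round_zero, sub_self, abs_zero] at this
    linarith
  calc K * δ / (2 * n) = K * supAbs y * (δ / (2 * n * supAbs y)) := by field_simp
    _ ≤ ρ t * psiA Θ α t :=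
      mul_le_mul hyρ (div_le_psiA_of_isObstruction Θ α hm ht hy) (by positivity)
        ((mul_pos hK hy0).le.trans hyρ)

end Jarnik

theorem jarnik_singular_to_badly_approximable_general {m n : ℕ} (hm : 0 < m) (hn : 0 < n)
    (Θ : Matrix (Fin n) (Fin m) ℝ) (φ ρ : ℝ → ℝ)
    (hφpos : ∀ t : ℝ, 0 < t → 0 < φ t) (hρpos : ∀ t : ℝ, 0 < t → 0 < ρ t)
    (hinv₂ : ∀ t : ℝ, 0 < t → φ (ρ t) = t)
    (η : ℝ) (hη : 0 < η)
    (hgrow : ∀ c : ℝ, 1 < c → ∀ t : ℝ, 0 < t → c ^ η * φ t < φ (c * t))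
    (hlim : Filter.limsup (fun t : ℝ => ENNReal.ofReal (φ t * psi Θ.transpose t))
      Filter.atTop < ⊤) :
    ∃ α : Fin n → ℝ,
      0 < Filter.liminf (fun t : ℝ => ENNReal.ofReal (ρ t * psiA Θ α t)) Filter.atTop := by
  obtain ⟨α, δ, K, hδ, hK, hobs⟩ : ∃ α δ K, 0 < δ ∧ 0 < K ∧
      ∀ᶠ t in atTop, ∃ y : Fin n → ℤ, IsObstruction Θ α δ t y ∧ K * supAbs y ≤ ρ t := by
    by_cases hΘ : ∃ z : Fin n → ℤ, z ≠ 0 ∧ formDist Θᵀ z = 0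
    · obtain ⟨z, hz, hz0⟩ := hΘ
      obtain ⟨α, hα⟩ := exists_forall_isObstruction_of_formDist_eq_zero Θ hz hz0
      have hρ := tendsto_atTop_of_rightInvOn hφpos (strictMonoOn_of_growth hφpos hη hgrow)
        hρpos hinv₂
      exact ⟨α, 1 / 2, 1, one_half_pos, one_pos,
        (hρ.eventually_ge_atTop (supAbs z)).mono fun t ht => ⟨z, hα t, by rwa [one_mul]⟩⟩
    · obtain ⟨C, hC⟩ := exists_eventually_le_of_limsup_lt_top hlim
      exact exists_eventually_isObstruction_of_formDist_pos Θ hm hn hφpos hρpos hinv₂ hη hgrow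
        (lt_max_of_lt_right one_pos) (hC.mono fun t ht => ht.trans (le_max_left C 1))
        fun y hy => (formDist_nonneg _ y).lt_of_ne' fun h => hΘ ⟨y, hy, h⟩
  exact ⟨α, zero_lt_liminf_rho_mul_psiA Θ hm hn α hδ hK hobs⟩

/-- **Theorem G (Jarník).** If `limsup_{t→∞} φ(t) ᵗψ(t) < ∞`, then there is `α ∈ ℝ^n`
with `liminf_{t→∞} ρ(t) ψ^{Θ,α}(t) > 0`. -/
theorem jarnik_singular_to_badly_approximable {m n : ℕ} (hm : 0 < m) (hn : 0 < n)
    (Θ : Matrix (Fin n) (Fin m) ℝ) (φ ρ : ℝ → ℝ)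
    (hφpos : ∀ t : ℝ, 0 < t → 0 < φ t) (hρpos : ∀ t : ℝ, 0 < t → 0 < ρ t)
    (hφ0 : φ 0 = 0) (hρ0 : ρ 0 = 0)
    (hinv₁ : ∀ t : ℝ, 0 < t → ρ (φ t) = t) (hinv₂ : ∀ t : ℝ, 0 < t → φ (ρ t) = t)
    (η : ℝ) (hη : 0 < η)
    (hmono : StrictMonoOn (fun t : ℝ => φ t * t ^ (-η)) (Set.Ioi (0 : ℝ)))
    (htend : Filter.Tendsto (fun t : ℝ => φ t * t ^ (-η)) Filter.atTop Filter.atTop)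
    (hgrow : ∀ c : ℝ, 1 < c → ∀ t : ℝ, 0 < t → c ^ η * φ t < φ (c * t))
    (hlim : Filter.limsup (fun t : ℝ => ENNReal.ofReal (φ t * psi Θ.transpose t))
      Filter.atTop < ⊤) :
    ∃ α : Fin n → ℝ,
      0 < Filter.liminf (fun t : ℝ => ENNReal.ofReal (ρ t * psiA Θ α t)) Filter.atTop :=
  jarnik_singular_to_badly_approximable_general hm hn Θ φ ρ hφpos hρpos hinv₂ η hη hgrow hlim
end

section
/- Let d be a positive integer and let C ⊂ ℝ^d be a compact convex set, symmetric about the origin, that contains d linearly independent points of ℤ^d. Then for every ξ ∈ ℝ^d the translated dilate d·C + ξ contains a point of ℤ^d. -/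
open Filter MeasureTheory

/-- If a compact, convex, origin-symmetric set `C ⊆ ℝ^d` contains `d` linearly independent
integer points, then for every `ξ ∈ ℝ^d` the set `d·C + ξ` contains an integer point. -/
theorem dilate_contains_lattice_point (d : ℕ) (hd : 0 < d) (C : Set (Fin d → ℝ))
    (hcomp : IsCompact C) (hconv : Convex ℝ C) (hsymm : ∀ z ∈ C, -z ∈ C)
    (v : Fin d → Fin d → ℤ)
    (hli : LinearIndependent ℝ (fun i => (fun j => (v i j : ℝ))))
    (hvC : ∀ i, (fun j => (v i j : ℝ)) ∈ C) :
    ∀ ξ : Fin d → ℝ, ∃ p : Fin d → ℤ, ∃ c ∈ C,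
      (fun j => (p j : ℝ)) = (d : ℝ) • c + ξ := by
  intro ξ
  set vr : Fin d → (Fin d → ℝ) := fun i j => (v i j : ℝ) with hvr
  -- key: small ℓ¹-combinations of the vr i lie in C
  have key : ∀ c : Fin d → ℝ, (∑ i, |c i|) ≤ 1 → (∑ i, c i • vr i) ∈ C := by
    intro c hc
    have h0 : (0 : Fin d → ℝ) ∈ C := by
      have := hconv (hvC ⟨0, hd⟩) (hsymm _ (hvC ⟨0, hd⟩))
        (by norm_num : (0:ℝ) ≤ 1/2) (by norm_num : (0:ℝ) ≤ 1/2) (by norm_num)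
      simpa using this
    set w : Option (Fin d) → ℝ := fun o => o.elim (1 - ∑ i, |c i|) (fun i => |c i|) with hw
    set z : Option (Fin d) → (Fin d → ℝ) :=
      fun o => o.elim 0 (fun i => if 0 ≤ c i then vr i else -vr i) with hz
    have hmem := hconv.sum_mem (t := (Finset.univ : Finset (Option (Fin d))))
      (w := w) (z := z)
      (fun o _ => by
        cases o with
        | none =>
          simpa [hw] using sub_nonneg.2 hc
        | some i => exact abs_nonneg _)
      (by simp [hw, Fintype.sum_option])
      (fun o _ => by
        cases o with
        | none => exact h0
        | some i =>
          by_cases h : 0 ≤ c i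
          · simpa [hz, h] using hvC i
          · simpa [hz, h] using hsymm _ (hvC i))
    have heq : (∑ o : Option (Fin d), w o • z o) = ∑ i, c i • vr i := by
      rw [Fintype.sum_option]
      simp only [hw, hz, Option.elim, smul_zero, zero_add]
      refine Finset.sum_congr rfl fun i _ => ?_
      by_cases h : 0 ≤ c i
      · simp [h, abs_of_nonneg h]
      · rw [if_neg h, abs_of_neg (lt_of_not_ge h), smul_neg, neg_smul, neg_neg]
    rwa [heq] at hmem
  -- basis from the linearly independent family
  haveI : Nonempty (Fin d) := ⟨⟨0, hd⟩⟩
  have h1d : (1:ℝ) ≤ (d:ℝ) := by exact_mod_cast hd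
  have hcard : Fintype.card (Fin d) = Module.finrank ℝ (Fin d → ℝ) := by simp
  let B := basisOfLinearIndependentOfCardEqFinrank hli hcard
  have hB : ∀ i, B i = vr i := fun i => by
    simp [B, coe_basisOfLinearIndependentOfCardEqFinrank, hvr]
  set t : Fin d → ℝ := fun i => B.repr ξ i with ht
  have hξ : ξ = ∑ i, t i • vr i := by
    conv_lhs => rw [← B.sum_repr ξ]
    exact Finset.sum_congr rfl fun i _ => by rw [hB]
  have hdne : (d : ℝ) ≠ 0 := Nat.cast_ne_zero.2 hd.ne'
  refine ⟨fun j => ∑ i, round (t i) * v i j,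
    (d : ℝ)⁻¹ • ∑ i, (round (t i) - t i) • vr i, ?_, ?_⟩
  · have : (d : ℝ)⁻¹ • ∑ i, ((round (t i) : ℝ) - t i) • vr i
        = ∑ i, (((round (t i) : ℝ) - t i) / d) • vr i := by
      rw [Finset.smul_sum]
      exact Finset.sum_congr rfl fun i _ => by rw [smul_smul, div_eq_inv_mul]
    rw [this]
    apply key
    have hbound : ∀ i : Fin d, |((round (t i) : ℝ) - t i) / d| ≤ 1 / (2 * d) := by
      intro i
      rw [abs_div, abs_of_nonneg (by positivity : (0:ℝ) ≤ (d:ℝ))]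
      rw [div_le_div_iff₀ (by positivity) (by positivity)]
      have h1 : |(round (t i) : ℝ) - t i| ≤ 1 / 2 := by
        rw [abs_sub_comm]; exact abs_sub_round (t i)
      nlinarith [h1d]
    calc ∑ i, |((round (t i) : ℝ) - t i) / d| ≤ ∑ _i : Fin d, (1:ℝ) / (2 * (d:ℝ)) := by
          exact Finset.sum_le_sum fun i _ => hbound i
      _ = (d:ℝ) * (1 / (2 * (d:ℝ))) := by simp [mul_comm]
      _ ≤ 1 := by
          rw [mul_one_div, div_le_one (by positivity)]
          nlinarith [h1d]
  · funext j
    have hsmul : (d : ℝ) • ((d : ℝ)⁻¹ • ∑ i, ((round (t i) : ℝ) - t i) • vr i)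
        = ∑ i, ((round (t i) : ℝ) - t i) • vr i := by
      rw [smul_smul, mul_inv_cancel₀ hdne, one_smul]
    rw [hsmul]
    have : ((∑ i, ((round (t i) : ℝ) - t i) • vr i) + ξ) j
        = ∑ i, (round (t i) : ℝ) * vr i j := by
      conv_lhs => rw [hξ]
      rw [← Finset.sum_add_distrib]
      simp only [Finset.sum_apply, Pi.add_apply, Pi.smul_apply, smul_eq_mul]
      exact Finset.sum_congr rfl fun i _ => by ring
    rw [this]
    push_cast
    rfl
end
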